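/- Under the assumptions of the previous third-derivative bound and additionally Σ_j ⟨∇⁴M_j(θ), u^{⊗4}⟩² ≤ τ⁶‖D(θ)u‖⁸ for all θ ∈ Θ°, u, the function g(θ) = −½‖M(θ)−η‖² satisfies |⟨∇⁴g(θ), u^{⊗4}⟩| ≤ (7 + 2r₀τ)·τ²·‖D(θ)u‖⁴. -/

import Mathlib

/-!
Restricting to the line `s ↦ θ + s • u` turns `⟨∇⁴g(θ), u^{⊗4}⟩` into the fourth derivative at `0`
of `-½ Σ_j (φ_j(s) - η_j)²`, which the Leibniz rule evaluates to
`-Σ_j (3 φ_j''² + 4 φ_j' φ_j''' + (φ_j - η_j) φ_j'''')`. The first sum is bounded by the `k = 2`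
tensor bound, the other two by Cauchy–Schwarz against the `k = 3` (using `Σ_j φ_j'² = ‖D(θ)u‖²`)
and `k = 4` tensor bounds, giving `(3 + 4 + 2r₀τ) τ² ‖D(θ)u‖⁴`.
-/

open Matrix

/-- `‖D(θ)u‖² = Σ_j ⟨∇M_j(θ), u⟩²` where `D(θ)² = ∇M(θ)∇M(θ)ᵀ`. -/
noncomputable def Dq {p q : ℕ} (M : (Fin p → ℝ) → Fin q → ℝ)
    (θ : Fin p → ℝ) (u : Fin p → ℝ) : ℝ :=
  ∑ j, (fderiv ℝ (fun t => M t j) θ u) ^ 2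

lemma iteratedDeriv_comp_add_smul {𝕜 E F : Type*} [NontriviallyNormedField 𝕜]
    [NormedAddCommGroup E] [NormedSpace 𝕜 E] [NormedAddCommGroup F] [NormedSpace 𝕜 F]
    {f : E → F} {n k : ℕ} (hf : ContDiff 𝕜 n f) (hk : k ≤ n) (x y : E) :
    iteratedDeriv k (fun s : 𝕜 => f (x + s • y))
      = fun t => iteratedFDeriv 𝕜 k f (x + t • y) (fun _ => y) := by
  induction k with
  | zero => simp
  | succ k ih =>
    rw [iteratedDeriv_succ, ih (by omega)]
    exact funext fun t => (hf.contDiffAt.of_le (by exact_mod_cast hk)).deriv_fderiv_add_smul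

lemma iteratedDeriv_four_sub_const_sq {𝕜 : Type*} [NontriviallyNormedField 𝕜]
    {φ : 𝕜 → 𝕜} {x : 𝕜} (hφ : ContDiffAt 𝕜 4 φ x) (a : 𝕜) :
    iteratedDeriv 4 (fun t => (φ t - a) ^ 2) x
      = 2 * (3 * iteratedDeriv 2 φ x ^ 2 + 4 * iteratedDeriv 1 φ x * iteratedDeriv 3 φ x
          + (φ x - a) * iteratedDeriv 4 φ x) := by
  have hψ : ContDiffAt 𝕜 4 (fun t => φ t - a) x := hφ.sub contDiffAt_const
  have hshift : ∀ k, 0 < k → iteratedDeriv k (fun t => φ t - a) x = iteratedDeriv k φ x := by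
    intro k hk
    simp only [sub_eq_neg_add]
    exact iteratedDeriv_const_add hk (-a)
  simp only [sq]
  rw [iteratedDeriv_fun_mul hψ hψ]
  simp only [Finset.sum_range_succ, Finset.sum_range_zero, iteratedDeriv_zero,
    hshift 1 one_pos, hshift 2 two_pos, hshift 3 three_pos, hshift 4 four_pos]
  norm_num [Nat.choose]
  ring

theorem iteratedFDeriv_four_neg_half_dotProduct_self_sub {E ι : Type*} [NormedAddCommGroup E]
    [NormedSpace ℝ E] [Fintype ι] {M : E → ι → ℝ} (hM : ContDiff ℝ 4 M) (η : ι → ℝ) (θ u : E) :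
    iteratedFDeriv ℝ 4 (fun t => -(1/2) * ((M t - η) ⬝ᵥ (M t - η))) θ (fun _ => u)
      = -∑ j, (3 * iteratedFDeriv ℝ 2 (fun t => M t j) θ (fun _ => u) ^ 2
          + 4 * fderiv ℝ (fun t => M t j) θ u
            * iteratedFDeriv ℝ 3 (fun t => M t j) θ (fun _ => u)
          + (M θ j - η j) * iteratedFDeriv ℝ 4 (fun t => M t j) θ (fun _ => u)) := by
  have hMj : ∀ j, ContDiff ℝ 4 (fun t => M t j) := contDiff_pi.mp hM
  have hg : (fun t => -(1/2) * ((M t - η) ⬝ᵥ (M t - η)))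
      = fun t => -(1/2) * ∑ j, (M t j - η j) ^ 2 := by
    funext t
    simp [dotProduct, sq]
  have hg_smooth : ContDiff ℝ 4 (fun t => -(1/2) * ∑ j, (M t j - η j) ^ 2) := by
    fun_prop
  have hline : ∀ j, ∀ k ≤ 4, iteratedDeriv k (fun s : ℝ => M (θ + s • u) j) 0
      = iteratedFDeriv ℝ k (fun t => M t j) θ (fun _ => u) := fun j k hk => by
    simpa using congrFun (iteratedDeriv_comp_add_smul (hMj j) hk θ u) 0
  have hφ : ∀ j, ContDiff ℝ 4 (fun s : ℝ => M (θ + s • u) j) := fun j =>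
    (hMj j).comp (by fun_prop)
  calc iteratedFDeriv ℝ 4 (fun t => -(1/2) * ((M t - η) ⬝ᵥ (M t - η))) θ (fun _ => u)
      = iteratedDeriv 4 (fun s : ℝ => -(1/2) * ∑ j, (M (θ + s • u) j - η j) ^ 2) 0 := by
        rw [hg]
        simpa using (congrFun (iteratedDeriv_comp_add_smul hg_smooth le_rfl θ u) 0).symm
    _ = -(1/2) * ∑ j, iteratedDeriv 4 (fun s : ℝ => (M (θ + s • u) j - η j) ^ 2) 0 := by
        rw [iteratedDeriv_const_mul_field, iteratedDeriv_fun_sum fun j _ =>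
          ((hφ j).sub contDiff_const).pow 2 |>.contDiffAt]
    _ = _ := by
        simp only [iteratedDeriv_four_sub_const_sq (hφ _).contDiffAt, hline _ _ le_rfl,
          hline _ 1 (by norm_num), hline _ 2 (by norm_num), hline _ 3 (by norm_num),
          iteratedFDeriv_one_apply, zero_smul, add_zero, ← Finset.mul_sum]
        ring

lemma abs_sum_mul_le_of_sum_sq_mul_sum_sq_le {ι : Type*} (s : Finset ι) (a b : ι → ℝ) {C : ℝ}
    (hC : 0 ≤ C) (h : (∑ i ∈ s, a i ^ 2) * ∑ i ∈ s, b i ^ 2 ≤ C ^ 2) :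
    |∑ i ∈ s, a i * b i| ≤ C :=
  abs_le_of_sq_le_sq ((Finset.sum_mul_sq_le_sq_mul_sq s a b).trans h) hC

lemma abs_sum_three_sq_add_four_mul_add_mul_le {ι : Type*} [Fintype ι]
    (c₁ c₂ c₃ c₄ m : ι → ℝ) {τ ρ D : ℝ} (hτ : 0 ≤ τ) (hρ : 0 ≤ ρ)
    (hD : ∑ j, c₁ j ^ 2 = D) (h₂ : ∑ j, c₂ j ^ 2 ≤ τ ^ 2 * D ^ 2)
    (h₃ : ∑ j, c₃ j ^ 2 ≤ τ ^ 4 * D ^ 3) (h₄ : ∑ j, c₄ j ^ 2 ≤ τ ^ 6 * D ^ 4)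
    (hm : ∑ j, m j ^ 2 ≤ ρ ^ 2) :
    |∑ j, (3 * c₂ j ^ 2 + 4 * c₁ j * c₃ j + m j * c₄ j)| ≤ (7 + ρ * τ) * τ ^ 2 * D ^ 2 := by
  have hD₀ : 0 ≤ D := hD ▸ Finset.sum_nonneg fun j _ => sq_nonneg _
  have hX : |∑ j, c₁ j * c₃ j| ≤ τ ^ 2 * D ^ 2 :=
    abs_sum_mul_le_of_sum_sq_mul_sum_sq_le _ _ _ (by positivity) <| by
      rw [hD]
      calc D * ∑ j, c₃ j ^ 2 ≤ D * (τ ^ 4 * D ^ 3) := mul_le_mul_of_nonneg_left h₃ hD₀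
        _ = (τ ^ 2 * D ^ 2) ^ 2 := by ring
  have hY : |∑ j, m j * c₄ j| ≤ ρ * τ ^ 3 * D ^ 2 :=
    abs_sum_mul_le_of_sum_sq_mul_sum_sq_le _ _ _ (by positivity) <|
      (mul_le_mul hm h₄ (Finset.sum_nonneg fun j _ => sq_nonneg _) (sq_nonneg ρ)).trans_eq
        (by ring)
  have hsplit : ∑ j, (3 * c₂ j ^ 2 + 4 * c₁ j * c₃ j + m j * c₄ j)
      = 3 * ∑ j, c₂ j ^ 2 + 4 * ∑ j, c₁ j * c₃ j + ∑ j, m j * c₄ j := by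
    simp only [Finset.sum_add_distrib, Finset.mul_sum, mul_assoc]
  have hS₂ : 0 ≤ ∑ j, c₂ j ^ 2 := Finset.sum_nonneg fun j _ => sq_nonneg _
  rw [hsplit, abs_le]
  obtain ⟨hX₁, hX₂⟩ := abs_le.mp hX
  obtain ⟨hY₁, hY₂⟩ := abs_le.mp hY
  constructor <;> linarith

theorem stmt8_general {p q : ℕ} (M : (Fin p → ℝ) → Fin q → ℝ) (Θ : Set (Fin p → ℝ))
    (τ r₀ : ℝ) (η : Fin q → ℝ)
    (hM : ContDiff ℝ 4 M) (hτ : 0 ≤ τ)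
    (hk2 : ∀ θ ∈ Θ, ∀ u : Fin p → ℝ,
      ∑ j, (iteratedFDeriv ℝ 2 (fun t => M t j) θ ![u, u]) ^ 2
        ≤ τ ^ 2 * Dq M θ u ^ 2)
    (hk3 : ∀ θ ∈ Θ, ∀ u : Fin p → ℝ,
      ∑ j, (iteratedFDeriv ℝ 3 (fun t => M t j) θ ![u, u, u]) ^ 2
        ≤ τ ^ 4 * Dq M θ u ^ 3)
    (hk4 : ∀ θ ∈ Θ, ∀ u : Fin p → ℝ,
      ∑ j, (iteratedFDeriv ℝ 4 (fun t => M t j) θ ![u, u, u, u]) ^ 2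
        ≤ τ ^ 6 * Dq M θ u ^ 4)
    (hη : ∀ θ ∈ Θ, Real.sqrt ((M θ - η) ⬝ᵥ (M θ - η)) ≤ 2 * r₀) :
    ∀ θ ∈ Θ, ∀ u : Fin p → ℝ,
      |iteratedFDeriv ℝ 4 (fun t => -(1/2) * ((M t - η) ⬝ᵥ (M t - η))) θ ![u, u, u, u]|
        ≤ (7 + 2 * r₀ * τ) * τ ^ 2 * Dq M θ u ^ 2 := by
  intro θ hθ u
  simp only [vec_single_eq_const, vecCons_const] at hk2 hk3 hk4 ⊢
  obtain ⟨hr₀, hsq⟩ := Real.sqrt_le_iff.mp (hη θ hθ)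
  have hdist : ∑ j, (M θ j - η j) ^ 2 ≤ (2 * r₀) ^ 2 := by
    simpa [dotProduct, sq] using hsq
  rw [iteratedFDeriv_four_neg_half_dotProduct_self_sub hM η θ u, abs_neg]
  exact abs_sum_three_sq_add_four_mul_add_mul_le _ _ _ _ _ hτ hr₀ rfl
    (hk2 θ hθ u) (hk3 θ hθ u) (hk4 θ hθ u) hdist

/-- under the `k = 2, 3, 4` tensor bounds on `Θ°` and `‖M(θ) − η‖ ≤ 2r₀`,
the function `g(θ) = −½‖M(θ) − η‖²` satisfies
`|⟨∇⁴g(θ), u^{⊗4}⟩| ≤ (7 + 2r₀τ)·τ²·‖D(θ)u‖⁴` on `Θ°`. -/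
theorem stmt8 {p q : ℕ} (M : (Fin p → ℝ) → Fin q → ℝ) (Θ : Set (Fin p → ℝ))
    (τ r₀ : ℝ) (η : Fin q → ℝ)
    (hM : ContDiff ℝ 4 M) (hτ : 0 ≤ τ) (hr : 0 ≤ r₀)
    (hk2 : ∀ θ ∈ Θ, ∀ u : Fin p → ℝ,
      ∑ j, (iteratedFDeriv ℝ 2 (fun t => M t j) θ ![u, u]) ^ 2
        ≤ τ ^ 2 * Dq M θ u ^ 2)
    (hk3 : ∀ θ ∈ Θ, ∀ u : Fin p → ℝ,
      ∑ j, (iteratedFDeriv ℝ 3 (fun t => M t j) θ ![u, u, u]) ^ 2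
        ≤ τ ^ 4 * Dq M θ u ^ 3)
    (hk4 : ∀ θ ∈ Θ, ∀ u : Fin p → ℝ,
      ∑ j, (iteratedFDeriv ℝ 4 (fun t => M t j) θ ![u, u, u, u]) ^ 2
        ≤ τ ^ 6 * Dq M θ u ^ 4)
    (hη : ∀ θ ∈ Θ, Real.sqrt ((M θ - η) ⬝ᵥ (M θ - η)) ≤ 2 * r₀) :
    ∀ θ ∈ Θ, ∀ u : Fin p → ℝ,
      |iteratedFDeriv ℝ 4 (fun t => -(1/2) * ((M t - η) ⬝ᵥ (M t - η))) θ ![u, u, u, u]|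
        ≤ (7 + 2 * r₀ * τ) * τ ^ 2 * Dq M θ u ^ 2 :=
  stmt8_general M Θ τ r₀ η hM hτ hk2 hk3 hk4 hη
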